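/- Let G be a connected finite simple graph of diameter at least 3 and let T be a spanning tree of G. Then every vertex of G has a neighbor in G that is an inner vertex of T. -/

import Mathlib

open SimpleGraph

variable {V : Type*}

/-- `T` is a spanning tree of `G`: a subgraph on all of `V` that is connected and acyclic. -/
def IsSpanningTree (G T : SimpleGraph V) : Prop :=
  T ≤ G ∧ T.Connected ∧ T.IsAcyclic

/-- The set of inner vertices of `T` (degree at least 2). -/
def innerSet (T : SimpleGraph V) : Set V :=
  {v | 2 ≤ (T.neighborSet v).ncard}

/-- Vertices that are inner vertices of at least two trees of the family. -/
def innerMulti {k : ℕ} (T : Fin k → SimpleGraph V) : Set V :=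
  {v | ∃ i j : Fin k, i ≠ j ∧ v ∈ innerSet (T i) ∧ v ∈ innerSet (T j)}

/-- Edges that belong to at least two trees of the family. -/
def edgeMulti {k : ℕ} (T : Fin k → SimpleGraph V) : Set (Sym2 V) :=
  {e | ∃ i j : Fin k, i ≠ j ∧ e ∈ (T i).edgeSet ∧ e ∈ (T j).edgeSet}

/-- A connected dominating set. -/
def IsConnDomSet (G : SimpleGraph V) (D : Set V) : Prop :=
  (G.induce D).Connected ∧ ∀ v ∉ D, ∃ w ∈ D, G.Adj v w

/-!
If no `G`-neighbour of `u` were inner in `T`, then every `T`-neighbour of `u` would be a leaf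
of `T`; as `T` is connected, `T` would be the star centred at `u`. Every vertex would then be
`G`-adjacent to `u`, so `G` would have diameter at most 2.
-/

theorem mem_innerSet_of_adj_of_adj [Finite V] {T : SimpleGraph V} {w a b : V}
    (ha : T.Adj w a) (hb : T.Adj w b) (hab : a ≠ b) : w ∈ innerSet T :=
  (Set.one_lt_ncard (Set.toFinite _)).mpr ⟨a, ha, b, hb, hab⟩

theorem adj_of_forall_adj_not_mem_innerSet [Finite V] {T : SimpleGraph V}
    (hT : T.Preconnected) {u x : V} (hux : u ≠ x)
    (hleaf : ∀ w, T.Adj u w → w ∉ innerSet T) : T.Adj u x := by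
  obtain ⟨p, hp⟩ := hT.exists_isPath u x
  cases p with
  | nil => exact absurd rfl hux
  | @cons _ w _ huw q =>
    cases q with
    | nil => exact huw
    | @cons _ z _ hwz q' =>
      have hu_notMem : u ∉ (Walk.cons hwz q').support := ((Walk.cons_isPath_iff _ _).mp hp).2
      have huz : u ≠ z := by rintro rfl; simp at hu_notMem
      exact absurd (mem_innerSet_of_adj_of_adj huw.symm hwz huz) (hleaf w huw)

theorem SimpleGraph.dist_le_two_of_forall_ne_adj {G : SimpleGraph V} {u : V}
    (hstar : ∀ x, x ≠ u → G.Adj u x) (x y : V) : G.dist x y ≤ 2 := by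
  have hwalk : ∀ x, ∃ p : G.Walk u x, p.length ≤ 1 := fun x => by
    by_cases hx : x = u
    · subst hx
      exact ⟨.nil, by simp⟩
    · exact ⟨(hstar x hx).toWalk, by simp⟩
  obtain ⟨p, hp⟩ := hwalk x
  obtain ⟨q, hq⟩ := hwalk y
  calc G.dist x y ≤ (p.reverse.append q).length := dist_le _
    _ = p.length + q.length := by simp
    _ ≤ 2 := by omega

theorem neighbor_inner_of_diam_ge_three_general [Fintype V] (G : SimpleGraph V)
    (hdiam : ∃ x y : V, 3 ≤ G.dist x y)
    (T : SimpleGraph V) (hT : IsSpanningTree G T) (u : V) :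
    ∃ w : V, G.Adj u w ∧ w ∈ innerSet T := by
  obtain ⟨hTG, hTconn, -⟩ := hT
  by_contra! hno_inner
  have hstar : ∀ x, x ≠ u → G.Adj u x := fun x hx =>
    hTG (adj_of_forall_adj_not_mem_innerSet hTconn.preconnected (Ne.symm hx)
      fun w huw => hno_inner w (hTG huw))
  obtain ⟨x, y, hxy⟩ := hdiam
  have := G.dist_le_two_of_forall_ne_adj hstar x y
  omega

/-- In a connected graph of diameter at least 3, every vertex has a neighbor that is
an inner vertex of any given spanning tree. -/
theorem neighbor_inner_of_diam_ge_three [Fintype V] (G : SimpleGraph V) (hG : G.Connected)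
    (hdiam : ∃ x y : V, 3 ≤ G.dist x y)
    (T : SimpleGraph V) (hT : IsSpanningTree G T) (u : V) :
    ∃ w : V, G.Adj u w ∧ w ∈ innerSet T :=
  neighbor_inner_of_diam_ge_three_general G hdiam T hT u
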